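/- arXiv:2006.05592 — 4 statements merged into one kernel-verified Lean document; each statement's English description precedes it below -/
import Mathlib

section
/- For every integer c ≥ 1 with c dividing n, there exist matrices X, Y ∈ ℝ^{n×3} such that σ(XYᵀ) (where σ(t) = max(0, min(1, t)) is applied entrywise) is exactly the adjacency matrix of the disjoint union of n/c cliques each on c vertices, i.e., σ(XYᵀ)_{ij} = 1 if i and j lie in the same block of size c, and σ(XYᵀ)_{ij} = 0 otherwise. (In particular, the diagonal entries corresponding to same-block pairs include i = j, so this realizes the adjacency matrix with self-loops; equivalently, the block-diagonal 0/1 matrix with n/c all-ones blocks of size c.) -/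
/-!
Label vertex `i` by its block index `b i = ⌊i / c⌋`. The matrix `1 - (b i - b j)²` has rank at
most three, being `(1 - b i²)·1 + b i·(2 b j) + 1·(-b j²)`. It equals `1` on the diagonal blocks,
and since distinct labels are integers at distance at least `1`, it is `≤ 0` everywhere else, so
the threshold `σ` turns it into the block indicator.
-/

open Matrix

noncomputable def sigma (t : ℝ) : ℝ := max 0 (min 1 t)

lemma sigma_one_sub_intCast_sq (k : ℤ) : sigma (1 - (k : ℝ) ^ 2) = if k = 0 then 1 else 0 := by
  split_ifs with hk
  · simp [sigma, hk]
  · have hk2 : (1 : ℝ) ≤ (k : ℝ) ^ 2 :=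
      mod_cast (one_le_sq_iff_one_le_abs _).mpr (Int.one_le_abs hk)
    simp only [sigma]
    rw [min_eq_right (by linarith), max_eq_left (by linarith)]

section SqDistFactorization

variable {m : Type*} (b : m → ℝ)

def sqDistLeftFactor : Matrix m (Fin 3) ℝ := of fun i => ![1 - b i ^ 2, b i, 1]

def sqDistRightFactor : Matrix m (Fin 3) ℝ := of fun j => ![1, 2 * b j, -b j ^ 2]

lemma sqDistLeftFactor_mul_transpose_apply (i j : m) :
    (sqDistLeftFactor b * (sqDistRightFactor b)ᵀ) i j = 1 - (b i - b j) ^ 2 := by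
  simp only [sqDistLeftFactor, sqDistRightFactor, mul_apply, transpose_apply, of_apply,
    Fin.sum_univ_three, cons_val_zero, cons_val_one, cons_val_two, head_cons, tail_cons]
  ring

end SqDistFactorization

theorem exists_sigma_mul_transpose_eq_ite_eq {m : Type*} (b : m → ℤ) :
    ∃ X Y : Matrix m (Fin 3) ℝ, ∀ i j : m,
      sigma ((X * Yᵀ) i j) = if b i = b j then 1 else 0 := by
  refine ⟨sqDistLeftFactor (fun i => (b i : ℝ)), sqDistRightFactor (fun i => (b i : ℝ)),
    fun i j => ?_⟩
  rw [sqDistLeftFactor_mul_transpose_apply, ← Int.cast_sub, sigma_one_sub_intCast_sq]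
  simp only [sub_eq_zero]

theorem exists_rank_three_clique_union_general (n c : ℕ) :
    ∃ X Y : Matrix (Fin n) (Fin 3) ℝ,
      ∀ i j : Fin n,
        sigma ((X * Yᵀ) i j) = if i.val / c = j.val / c then 1 else 0 := by
  obtain ⟨X, Y, hXY⟩ := 
    exists_sigma_mul_transpose_eq_ite_eq fun i : Fin n => ((i.val / c : ℕ) : ℤ)
  exact ⟨X, Y, fun i j => by simpa only [Nat.cast_inj] using hXY i j⟩

theorem exists_rank_three_clique_union (n c : ℕ) (hc : 1 ≤ c) (hdvd : c ∣ n) :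
    ∃ X Y : Matrix (Fin n) (Fin 3) ℝ,
      ∀ i j : Fin n,
        sigma ((X * Yᵀ) i j) = if i.val / c = j.val / c then 1 else 0 :=
  exists_rank_three_clique_union_general n c
end

section
/- Let t₁ < t₂ < ... < t_c be integers in {1,...,n}. Then there exists a real polynomial p of degree at most 2c such that p(t) > 0 for t ∈ {t₁,...,t_c} and p(t) < 0 for all integers t ∈ {1,...,n} \ {t₁,...,t_c}. -/
/-!
Take `p = -∏ᵢ ((X - tᵢ)² - 1/4)`, whose roots are the half-integers `tᵢ ± 1/2`. At an integer `m`
the factor `(m - tᵢ)² - 1/4` is `-1/4` when `m = tᵢ` and at least `3/4` otherwise, so the product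
has exactly one negative factor at each `tᵢ` and none elsewhere.
-/

open Polynomial Finset

lemma one_le_sq_intCast_sub {a b : ℤ} (h : a ≠ b) : 1 ≤ ((a : ℝ) - b) ^ 2 := by
  have : (1 : ℝ) ≤ |(a : ℝ) - b| := by exact_mod_cast Int.one_le_abs (sub_ne_zero.mpr h)
  exact one_le_sq_iff_one_le_abs _ |>.mpr this

noncomputable def separatingPoly (s : Finset ℤ) : ℝ[X] :=
  -∏ a ∈ s, ((X - C (a : ℝ)) ^ 2 - C (1 / 4))

lemma eval_separatingPoly (s : Finset ℤ) (x : ℝ) :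
    (separatingPoly s).eval x = -∏ a ∈ s, ((x - a) ^ 2 - 1 / 4) := by
  simp [separatingPoly, eval_prod]

lemma natDegree_separatingPoly_le (s : Finset ℤ) : (separatingPoly s).natDegree ≤ 2 * #s := by
  rw [separatingPoly, natDegree_neg, mul_comm, ← smul_eq_mul, ← sum_const]
  exact (natDegree_prod_le _ _).trans <| sum_le_sum fun a _ ↦ by compute_degree

lemma prod_sq_sub_pos_of_notMem {s : Finset ℤ} {m : ℤ} (hm : m ∉ s) :
    0 < ∏ a ∈ s, (((m : ℝ) - a) ^ 2 - 1 / 4) :=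
  prod_pos fun a ha ↦ by
    linarith [one_le_sq_intCast_sub (show m ≠ a from fun h ↦ hm (h ▸ ha))]

lemma eval_separatingPoly_neg_of_notMem {s : Finset ℤ} {m : ℤ} (hm : m ∉ s) :
    (separatingPoly s).eval (m : ℝ) < 0 := by
  rw [eval_separatingPoly, neg_neg_iff_pos]
  exact prod_sq_sub_pos_of_notMem hm

lemma eval_separatingPoly_pos_of_mem {s : Finset ℤ} {m : ℤ} (hm : m ∈ s) :
    0 < (separatingPoly s).eval (m : ℝ) := by
  have hrest := prod_sq_sub_pos_of_notMem (notMem_erase m s)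
  rw [eval_separatingPoly, ← mul_prod_erase s _ hm]
  nlinarith

theorem exists_sign_separating_polynomial_general (n c : ℕ) (t : Fin c → ℤ)
    (hmono : StrictMono t) :
    ∃ p : Polynomial ℝ, p.degree ≤ 2 * c ∧
      (∀ i : Fin c, 0 < p.eval ((t i : ℝ))) ∧
      (∀ m : ℤ, m ∈ Finset.Icc (1 : ℤ) n → (∀ i, t i ≠ m) →
        p.eval ((m : ℝ)) < 0) := by
  have hcard : #(univ.image t) = c := by
    rw [card_image_of_injective _ hmono.injective, card_univ, Fintype.card_fin]
  refine ⟨separatingPoly (univ.image t), ?_, fun i ↦ ?_, fun m _ hm ↦ ?_⟩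
  · exact_mod_cast degree_le_of_natDegree_le (hcard ▸ natDegree_separatingPoly_le _)
  · exact eval_separatingPoly_pos_of_mem (mem_image_of_mem t (mem_univ i))
  · refine eval_separatingPoly_neg_of_notMem ?_
    simpa [mem_image] using hm

theorem exists_sign_separating_polynomial (n c : ℕ) (t : Fin c → ℤ)
    (hmono : StrictMono t) (hrange : ∀ i, t i ∈ Finset.Icc (1 : ℤ) n) :
    ∃ p : Polynomial ℝ, p.degree ≤ 2 * c ∧
      (∀ i : Fin c, 0 < p.eval ((t i : ℝ))) ∧
      (∀ m : ℤ, m ∈ Finset.Icc (1 : ℤ) n → (∀ i, t i ≠ m) →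
        p.eval ((m : ℝ)) < 0) :=
  exists_sign_separating_polynomial_general n c t hmono
end

section
/- Let A ∈ {0,1}^{n×n} be a matrix in which every row has at most c nonzero entries. Then there exist matrices X, Y ∈ ℝ^{n×(2c+1)} and a scaling such that A = σ(XYᵀ), where σ(t) = max(0, min(1, t)) is applied entrywise. In particular, the adjacency matrix of any graph of maximum degree at most c admits an exact factorization of this form with embedding dimension 2c+1. -/
/-! Put integer nodes `0, 1, …, n-1` on the real line. For a row `i` with support `S`, the
polynomial `1 - ∏_{s ∈ S} (X - s)²` has degree at most `2c`, equals `1` at the nodes of `S`, and is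
`≤ 0` at every other node, since there each factor `(j - s)²` of the product is at least `1`.
Hence `σ` of its values at the nodes is the row itself. Those values are the product of its
coefficient vector (the row `xᵢ`) with the Vandermonde matrix `Y` of the nodes. -/

open Matrix

open Polynomial

lemma sigma_of_nonpos {t : ℝ} (ht : t ≤ 0) : sigma t = 0 := by
  simp [sigma, ht, ht.trans zero_le_one]

lemma sigma_one : sigma 1 = 1 := by
  norm_num [sigma]

lemma Polynomial.sum_fin_coeff_mul_pow {R : Type*} [CommSemiring R] {p : R[X]} {m : ℕ}
    (hp : p.natDegree < m) (x : R) :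
    ∑ k : Fin m, p.coeff k * x ^ (k : ℕ) = p.eval x := by
  rw [eval_eq_sum_range' hp, Fin.sum_univ_eq_sum_range (fun k => p.coeff k * x ^ k)]

section BumpPoly

variable {ι : Type*} (v : ι → ℤ)

noncomputable def bumpPoly (S : Finset ι) : ℝ[X] :=
  1 - ∏ s ∈ S, (X - C (v s : ℝ)) ^ 2

lemma natDegree_bumpPoly_le (S : Finset ι) : (bumpPoly v S).natDegree ≤ 2 * S.card := by
  have hfactor : ∀ s ∈ S, ((X - C (v s : ℝ)) ^ 2).natDegree ≤ 2 := fun s _ =>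
    natDegree_pow_le.trans (by rw [natDegree_X_sub_C])
  have hprod : (∏ s ∈ S, (X - C (v s : ℝ)) ^ 2).natDegree ≤ 2 * S.card := by
    refine (natDegree_prod_le _ _).trans ((Finset.sum_le_sum hfactor).trans ?_)
    rw [Finset.sum_const, smul_eq_mul, mul_comm]
  exact (natDegree_sub_le _ _).trans (by simpa using hprod)

lemma eval_bumpPoly (S : Finset ι) (x : ℝ) :
    (bumpPoly v S).eval x = 1 - ∏ s ∈ S, (x - v s) ^ 2 := by
  simp [bumpPoly, eval_prod]

lemma sigma_eval_bumpPoly [DecidableEq ι] (hv : Function.Injective v) (S : Finset ι) (j : ι) :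
    sigma ((bumpPoly v S).eval (v j : ℝ)) = if j ∈ S then 1 else 0 := by
  rw [eval_bumpPoly]
  split_ifs with hj
  · rw [Finset.prod_eq_zero hj (by simp), sub_zero, sigma_one]
  · refine sigma_of_nonpos (sub_nonpos.2 (Finset.one_le_prod fun s hs => ?_))
    have hne : v j - v s ≠ 0 := sub_ne_zero.2 (hv.ne (ne_of_mem_of_not_mem hs hj).symm)
    exact_mod_cast one_le_sq_iff_one_le_abs _ |>.2 (Int.one_le_abs hne)

end BumpPoly

theorem exact_factorization_of_sparse_rows (n c : ℕ) (A : Matrix (Fin n) (Fin n) ℝ)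
    (hbin : ∀ i j, A i j = 0 ∨ A i j = 1)
    (hsparse : ∀ i, (Finset.univ.filter (fun j => A i j ≠ 0)).card ≤ c) :
    ∃ X Y : Matrix (Fin n) (Fin (2 * c + 1)) ℝ, A = (X * Yᵀ).map sigma := by
  let v : Fin n → ℤ := fun j => (j : ℕ)
  have hv : Function.Injective v := Nat.cast_injective.comp Fin.val_injective
  let S i := Finset.univ.filter (fun j => A i j ≠ 0)
  have hdeg i : (bumpPoly v (S i)).natDegree < 2 * c + 1 :=
    (natDegree_bumpPoly_le v (S i)).trans_lt (by have : (S i).card ≤ c := hsparse i; omega)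
  refine ⟨Matrix.of fun i k => (bumpPoly v (S i)).coeff k,
    Matrix.of fun j k => (v j : ℝ) ^ (k : ℕ), ?_⟩
  ext i j
  simp only [map_apply, mul_apply, transpose_apply, of_apply, sum_fin_coeff_mul_pow (hdeg i),
    sigma_eval_bumpPoly v hv, S, Finset.mem_filter, Finset.mem_univ, true_and]
  rcases hbin i j with h | h <;> simp [h]
end

section
/- Suppose G is a graph on n vertices whose adjacency matrix A satisfies A = σ(XYᵀ) for X, Y ∈ ℝ^{n×k}, and G is the disjoint union of n/c cliques of size c (with c ≥ 3 dividing n). Then a graph with maximum degree c−1 and at least (n/c)·C(c,3) ≥ n(c−1)(c−2)/6 triangles admits an embedding of dimension k = 3; i.e., there is no lower bound forcing k ≥ n/polylog(n) once the factorization XYᵀ is allowed to be non-symmetric (non-PSD). -/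
open Matrix

/-!
Label the vertices of the `q`-th block of size `c` by `q`. The bilinear form
`1 - (s - t) ^ 2 = (1 - s ^ 2) * 1 + (2 * s) * t + (-1) * t ^ 2` has rank 3, and since
`1 ≤ 1 - d ^ 2` forces `d = 0`, thresholding it with `sigma` gives exactly the relation
"same label". The resulting graph is a disjoint union of `n / c` copies of `K_c`: every degree
is `c - 1` and there are `(n / c) * C(c, 3) = n (c - 1) (c - 2) / 6` triangles.
-/

open Finset

lemma sigma_eq_one_iff {t : ℝ} : sigma t = 1 ↔ 1 ≤ t := by
  unfold sigma
  constructor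
  · intro h
    by_contra! ht
    have : max 0 (min 1 t) < 1 := max_lt zero_lt_one (min_lt_of_right_lt ht)
    linarith
  · intro h
    rw [min_eq_left h, max_eq_right zero_le_one]

lemma sigma_one_sub_sq_eq_one_iff {x : ℝ} : sigma (1 - x ^ 2) = 1 ↔ x = 0 := by
  rw [sigma_eq_one_iff, le_sub_self_iff, sq_nonpos_iff]

lemma Matrix.exists_mul_transpose_eq_one_sub_sq {m n : Type*} (f : m → ℝ) (g : n → ℝ) :
    ∃ (X : Matrix m (Fin 3) ℝ) (Y : Matrix n (Fin 3) ℝ),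
      ∀ i j, (X * Yᵀ) i j = 1 - (f i - g j) ^ 2 := by
  refine ⟨of fun i => ![1 - f i ^ 2, 2 * f i, -1], of fun j => ![1, g j, g j ^ 2],
    fun i j => ?_⟩
  simp only [mul_apply, transpose_apply, of_apply, Fin.sum_univ_three, Fin.isValue,
    cons_val_zero, cons_val_one, cons_val]
  ring

lemma Nat.six_mul_choose_three_right (c : ℕ) : 6 * c.choose 3 = c * (c - 1) * (c - 2) := by
  rw [show 6 = (3).factorial from rfl, ← Nat.descFactorial_eq_factorial_mul_choose]
  simp only [Nat.descFactorial, tsub_zero, mul_one]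
  ring

lemma Equiv.card_filter_fst_apply_eq {V β γ : Type*} [Fintype V] [Fintype γ] [DecidableEq β]
    (e : V ≃ β × γ) (b : β) : #(univ.filter fun v => (e v).1 = b) = Fintype.card γ := by
  rw [← card_univ]
  refine card_bij' (fun v _ => (e v).2) (fun c _ => e.symm (b, c)) (by simp) (by simp) ?_ (by simp)
  intro v hv
  rw [← (mem_filter.mp hv).2]
  simp

namespace SimpleGraph

variable {V β : Type*}

def blockGraph (f : V → β) : SimpleGraph V where
  Adj u v := u ≠ v ∧ f u = f v

@[simp]
lemma blockGraph_adj {f : V → β} {u v : V} : (blockGraph f).Adj u v ↔ u ≠ v ∧ f u = f v :=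
  Iff.rfl

variable [Fintype V] [DecidableEq V] [DecidableEq β] (f : V → β)

instance : DecidableRel (blockGraph f).Adj := fun _ _ => inferInstanceAs (Decidable (_ ∧ _))

lemma neighborFinset_blockGraph (v : V) :
    (blockGraph f).neighborFinset v = (univ.filter (f · = f v)).erase v := by
  ext u
  simp [and_comm, eq_comm]

lemma degree_blockGraph (v : V) : (blockGraph f).degree v = #(univ.filter (f · = f v)) - 1 := by
  rw [← card_neighborFinset_eq_degree, neighborFinset_blockGraph, card_erase_of_mem (by simp)]

variable [Fintype β] {k : ℕ}

lemma cliqueFinset_blockGraph (hk : k ≠ 0) :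
    (blockGraph f).cliqueFinset k =
      univ.biUnion fun b => powersetCard k (univ.filter (f · = b)) := by
  ext s
  simp only [mem_cliqueFinset_iff, isNClique_iff, isClique_iff, Set.Pairwise, mem_coe,
    blockGraph_adj, mem_biUnion, mem_univ, true_and, mem_powersetCard, subset_iff, mem_filter]
  constructor
  · rintro ⟨hs, rfl⟩
    obtain ⟨v, hv⟩ := card_ne_zero.mp hk
    refine ⟨f v, fun u hu => ?_, rfl⟩
    obtain rfl | huv := eq_or_ne u v
    · rfl
    · exact (hs hu hv huv).2
  · rintro ⟨b, hb, rfl⟩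
    exact ⟨fun u hu w hw huw => ⟨huw, (hb hu).trans (hb hw).symm⟩, rfl⟩

lemma card_cliqueFinset_blockGraph (hk : k ≠ 0) :
    #((blockGraph f).cliqueFinset k) = ∑ b, (#(univ.filter (f · = b))).choose k := by
  rw [cliqueFinset_blockGraph f hk, card_biUnion]
  · simp only [card_powersetCard]
  · intro b _ b' _ hbb'
    rw [Function.onFun, Finset.disjoint_left]
    intro s hs hs'
    simp only [mem_powersetCard, subset_iff, mem_filter] at hs hs'
    obtain ⟨v, hv⟩ := card_ne_zero.mp (hs.2.trans_ne hk)
    exact hbb' ((hs.1 hv).2.symm.trans (hs'.1 hv).2)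

end SimpleGraph

open SimpleGraph

theorem low_dim_embeddings_capture_triangles_general (n c : ℕ) (hdvd : c ∣ n) :
    ∃ X Y : Matrix (Fin n) (Fin 3) ℝ, ∃ G : SimpleGraph (Fin n),
      (∀ i j : Fin n, G.Adj i j ↔ i ≠ j ∧ sigma ((X * Yᵀ) i j) = 1) ∧
      (∀ v : Fin n, (G.neighborSet v).ncard = c - 1) ∧
      n * (c - 1) * (c - 2) / 6 ≤ (G.cliqueSet 3).ncard := by
  classical
  let e : Fin n ≃ Fin (n / c) × Fin c :=
    (finCongr (Nat.div_mul_cancel hdvd).symm).trans finProdFinEquiv.symm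
  let block : Fin n → Fin (n / c) := fun v => (e v).1
  obtain ⟨X, Y, hXY⟩ :=
    exists_mul_transpose_eq_one_sub_sq (fun v => (block v : ℝ)) (fun v => (block v : ℝ))
  refine ⟨X, Y, blockGraph block, fun i j => ?_, fun v => ?_, ?_⟩
  · rw [blockGraph_adj, hXY, sigma_one_sub_sq_eq_one_iff, sub_eq_zero, Nat.cast_inj, Fin.val_inj]
  · rw [Set.ncard_eq_toFinset_card', ← neighborFinset_def, card_neighborFinset_eq_degree,
      degree_blockGraph, e.card_filter_fst_apply_eq, Fintype.card_fin]
  · rw [← coe_cliqueFinset, Set.ncard_coe_finset, card_cliqueFinset_blockGraph _ three_ne_zero]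
    simp only [block, e.card_filter_fst_apply_eq, Fintype.card_fin, sum_const, card_univ,
      smul_eq_mul]
    have hcount : 6 * (n / c * c.choose 3) = n * (c - 1) * (c - 2) := by
      conv_rhs => rw [← Nat.div_mul_cancel hdvd]
      rw [mul_left_comm, Nat.six_mul_choose_three_right]
      ring
    exact Nat.div_le_of_le_mul hcount.ge

theorem low_dim_embeddings_capture_triangles (n c : ℕ) (hc : 3 ≤ c) (hdvd : c ∣ n) :
    ∃ X Y : Matrix (Fin n) (Fin 3) ℝ, ∃ G : SimpleGraph (Fin n),
      (∀ i j : Fin n, G.Adj i j ↔ i ≠ j ∧ sigma ((X * Yᵀ) i j) = 1) ∧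
      (∀ v : Fin n, (G.neighborSet v).ncard = c - 1) ∧
      n * (c - 1) * (c - 2) / 6 ≤ (G.cliqueSet 3).ncard :=
  low_dim_embeddings_capture_triangles_general n c hdvd
end
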